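/- arXiv:2207.03203 — 8 statements merged into one kernel-verified Lean document; each statement's English description precedes it below -/
import Mathlib

section
/- For every finite simple graph G, the minimum over all vertex subsets X of max(Δ(G−X), |X|) equals the minimum over all nonnegative integers k of max(k, n(G) − α_k(G)), where α_k(G) is the k-independence number and n(G) the order of G. -/
open scoped Classical

/-- The maximum degree of the graph obtained from `G` by deleting the vertex set `X`,
i.e. `Δ(G − X)`: the maximum, over vertices `v ∉ X`, of the number of neighbors of `v`
outside `X`. -/
noncomputable def delMaxDeg {V : Type*} [Fintype V] (G : SimpleGraph V) (X : Finset V) : ℕ :=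
  (Xᶜ).sup fun v => ((Xᶜ).filter fun w => G.Adj v w).card

/-- The `k`-independence number `α_k(G)`: the maximum cardinality of a set of vertices
inducing a subgraph of maximum degree at most `k`. -/
noncomputable def kIndepNum {V : Type*} [Fintype V] (G : SimpleGraph V) (k : ℕ) : ℕ :=
  ((Finset.univ : Finset (Finset V)).filter
    fun S => ∀ v ∈ S, (S.filter fun w => G.Adj v w).card ≤ k).sup Finset.card

theorem min_max_del_eq_min_max_kIndep {V : Type*} [Fintype V] (G : SimpleGraph V) :
    sInf (Set.range fun X : Finset V => max (delMaxDeg G X) X.card)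
      = sInf (Set.range fun k : ℕ => max k (Fintype.card V - kIndepNum G k)) := by
  apply le_antisymm
  · -- take k achieving the RHS infimum
    have hne : (Set.range fun k : ℕ => max k (Fintype.card V - kIndepNum G k)).Nonempty :=
      ⟨_, ⟨0, rfl⟩⟩
    obtain ⟨k, hk⟩ := Nat.sInf_mem hne
    -- take a maximum k-independent set S
    have hfne : (((Finset.univ : Finset (Finset V)).filter
        fun S => ∀ v ∈ S, (S.filter fun w => G.Adj v w).card ≤ k)).Nonempty := by
      refine ⟨∅, ?_⟩
      simp
    obtain ⟨S, hSmem, hSsup⟩ := Finset.exists_mem_eq_sup _ hfne Finset.card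
    rw [Finset.mem_filter] at hSmem
    have hScard : S.card = kIndepNum G k := hSsup.symm
    have hdel : delMaxDeg G Sᶜ ≤ k := by
      rw [delMaxDeg, compl_compl]
      exact Finset.sup_le fun v hv => hSmem.2 v hv
    have hXcard : (Sᶜ : Finset V).card = Fintype.card V - S.card := by
      rw [Finset.card_compl]
    calc sInf (Set.range fun X : Finset V => max (delMaxDeg G X) X.card)
        ≤ max (delMaxDeg G Sᶜ) (Sᶜ : Finset V).card := Nat.sInf_le ⟨Sᶜ, rfl⟩
      _ ≤ max k (Fintype.card V - kIndepNum G k) := by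
          apply max_le_max hdel
          rw [hXcard, hScard]
      _ = sInf _ := hk
  · have hne : (Set.range fun X : Finset V => max (delMaxDeg G X) X.card).Nonempty :=
      ⟨_, ⟨∅, rfl⟩⟩
    obtain ⟨X, hX⟩ := Nat.sInf_mem hne
    set k := delMaxDeg G X with hk
    -- Xᶜ is a k-independent set
    have hmem : (Xᶜ : Finset V) ∈ ((Finset.univ : Finset (Finset V)).filter
        fun S => ∀ v ∈ S, (S.filter fun w => G.Adj v w).card ≤ k) := by
      rw [Finset.mem_filter]
      exact ⟨Finset.mem_univ _, fun v hv => Finset.le_sup (f := fun v => ((Xᶜ).filter fun w => G.Adj v w).card) hv⟩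
    have halpha : (Xᶜ : Finset V).card ≤ kIndepNum G k :=
      Finset.le_sup (f := Finset.card) hmem
    have hXc : (Xᶜ : Finset V).card = Fintype.card V - X.card := by
      rw [Finset.card_compl]
    have hXle : X.card ≤ Fintype.card V := Finset.card_le_univ X
    have hsub : Fintype.card V - kIndepNum G k ≤ X.card := by omega
    calc sInf (Set.range fun k : ℕ => max k (Fintype.card V - kIndepNum G k))
        ≤ max k (Fintype.card V - kIndepNum G k) := Nat.sInf_le ⟨k, rfl⟩
      _ ≤ max (delMaxDeg G X) X.card := max_le_max le_rfl hsub
      _ = sInf _ := hX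
end

section
/- Every simple hypergraph H satisfies Tr(Tr(H)) = H, where Tr(H) is the transversal hypergraph whose hyperedges are the minimal transversals of H. -/
open scoped Classical

/-- `S` is a transversal of the hypergraph `H` (given as a finite set of hyperedges):
it meets every hyperedge. -/
def IsTransversal {V : Type*} (H : Finset (Finset V)) (S : Finset V) : Prop :=
  ∀ e ∈ H, ∃ v ∈ e, v ∈ S

/-- The transversal hypergraph `Tr(H)`: its hyperedges are the minimal transversals of `H`. -/
noncomputable def Tr {V : Type*} [Fintype V] (H : Finset (Finset V)) : Finset (Finset V) :=
  (Finset.univ : Finset (Finset V)).filter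
    fun S => IsTransversal H S ∧ ∀ T ⊂ S, ¬ IsTransversal H T

lemma mem_Tr {V : Type*} [Fintype V] {H : Finset (Finset V)} {S : Finset V} :
    S ∈ Tr H ↔ IsTransversal H S ∧ ∀ T ⊂ S, ¬ IsTransversal H T := by
  simp [Tr]

/-- Every transversal contains a minimal transversal. -/
lemma exists_min {V : Type*} [Fintype V] (H : Finset (Finset V)) :
    ∀ T : Finset V, IsTransversal H T → ∃ S, S ⊆ T ∧ S ∈ Tr H := by
  intro T
  induction T using Finset.strongInduction with
  | _ T ih =>
    intro hT
    by_cases h : ∀ U ⊂ T, ¬ IsTransversal H U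
    · exact ⟨T, subset_rfl, mem_Tr.2 ⟨hT, h⟩⟩
    · push_neg at h
      obtain ⟨U, hU, hUt⟩ := h
      obtain ⟨S, hS, hmem⟩ := ih U hU hUt
      exact ⟨S, hS.trans hU.subset, hmem⟩

/-- A transversal of `Tr H` contains an edge of `H`. -/
lemma contains_edge {V : Type*} [Fintype V] {H : Finset (Finset V)} {T : Finset V}
    (hT : IsTransversal (Tr H) T) : ∃ f ∈ H, f ⊆ T := by
  by_contra h
  push_neg at h
  have hC : IsTransversal H (Finset.univ \ T) := by
    intro e he
    obtain ⟨v, hv, hvT⟩ := Finset.not_subset.1 (h e he)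
    exact ⟨v, hv, Finset.mem_sdiff.2 ⟨Finset.mem_univ v, hvT⟩⟩
  obtain ⟨S, hS, hmem⟩ := exists_min H _ hC
  obtain ⟨v, hvS, hvT⟩ := hT S hmem
  exact (Finset.mem_sdiff.1 (hS hvS)).2 hvT

/-- Every edge of `H` is a transversal of `Tr H`. -/
lemma edge_transversal {V : Type*} [Fintype V] {H : Finset (Finset V)} {e : Finset V}
    (he : e ∈ H) : IsTransversal (Tr H) e := by
  intro S hS
  obtain ⟨v, hv, hv'⟩ := (mem_Tr.1 hS).1 e he
  exact ⟨v, hv', hv⟩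

/-- Every simple hypergraph `H` satisfies `Tr(Tr(H)) = H`. -/
theorem tr_tr_eq_self {V : Type*} [Fintype V] (H : Finset (Finset V))
    (hne : ∀ e ∈ H, e.Nonempty)
    (hsimple : ∀ e ∈ H, ∀ f ∈ H, e ⊆ f → e = f) :
    Tr (Tr H) = H := by
  ext X
  rw [mem_Tr]
  constructor
  · rintro ⟨hX, hmin⟩
    obtain ⟨f, hf, hfX⟩ := contains_edge hX
    rcases eq_or_ne f X with rfl | hne'
    · exact hf
    · exact absurd (edge_transversal hf) (hmin f (hfX.ssubset_of_ne hne'))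
  · intro hX
    refine ⟨edge_transversal hX, fun T hT hTt => ?_⟩
    obtain ⟨f, hf, hfT⟩ := contains_edge hTt
    have := hsimple f hf X hX (hfT.trans hT.subset)
    subst this
    exact hT.not_subset hfT
end

section
/- For a finite graph G with at least one vertex, there exists a vertex subset X ⊆ V(G) of minimum cardinality among those achieving min over X of max(Δ(G−X), |X|), and for such X the complement V(G)∖X is a maximum k'-independent set where k' = Δ(G−X). -/
open scoped Classical

/-- For a finite graph with at least one vertex, there is a set `X` of minimum cardinality
among those achieving `min_X max(Δ(G−X), |X|)`, and for every such `X` the complement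
`V(G) ∖ X` is a maximum `k'`-independent set, where `k' = Δ(G−X)`. -/
theorem exists_min_card_achiever_compl_max_kIndep {V : Type*} [Fintype V]
    (G : SimpleGraph V) (h : 0 < Fintype.card V) :
    (∃ X : Finset V,
        (max (delMaxDeg G X) X.card
            = sInf (Set.range fun X' : Finset V => max (delMaxDeg G X') X'.card)) ∧
        ∀ X' : Finset V,
          max (delMaxDeg G X') X'.card
              = sInf (Set.range fun X'' : Finset V => max (delMaxDeg G X'') X''.card) →
          X.card ≤ X'.card) ∧
    (∀ X : Finset V,
        (max (delMaxDeg G X) X.card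
            = sInf (Set.range fun X' : Finset V => max (delMaxDeg G X') X'.card)) →
        (∀ X' : Finset V,
          max (delMaxDeg G X') X'.card
              = sInf (Set.range fun X'' : Finset V => max (delMaxDeg G X'') X''.card) →
          X.card ≤ X'.card) →
        ((∀ v ∈ Xᶜ, ((Xᶜ).filter fun w => G.Adj v w).card ≤ delMaxDeg G X) ∧
          (Xᶜ).card = kIndepNum G (delMaxDeg G X))) := by

  set F : Finset V → ℕ := fun X' => max (delMaxDeg G X') X'.card with hF
  have hrange : (Set.range F).Nonempty := ⟨F ∅, ⟨∅, rfl⟩⟩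
  have hm := Nat.sInf_mem hrange
  obtain ⟨X0, hX0⟩ := hm
  constructor
  · have hne : ((Finset.univ : Finset (Finset V)).filter
        fun X => F X = sInf (Set.range F)).Nonempty := ⟨X0, by simp [hX0]⟩
    obtain ⟨X, hXmem, hXmin⟩ := Finset.exists_min_image _ Finset.card hne
    refine ⟨X, (Finset.mem_filter.mp hXmem).2, fun X' hX' => ?_⟩
    exact hXmin X' (Finset.mem_filter.mpr ⟨Finset.mem_univ _, hX'⟩)
  · intro X hach hmin
    have ha : ∀ v ∈ Xᶜ, ((Xᶜ).filter fun w => G.Adj v w).card ≤ delMaxDeg G X :=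
      fun v hv => Finset.le_sup (f := fun v => ((Xᶜ).filter fun w => G.Adj v w).card) hv
    refine ⟨ha, le_antisymm ?_ ?_⟩
    · exact Finset.le_sup (Finset.mem_filter.mpr ⟨Finset.mem_univ _, ha⟩)
    · -- kIndepNum ≤ |Xᶜ|
      have hfne : ((Finset.univ : Finset (Finset V)).filter
          fun S => ∀ v ∈ S, (S.filter fun w => G.Adj v w).card ≤ delMaxDeg G X).Nonempty :=
        ⟨∅, by simp⟩
      obtain ⟨S, hSmem, hSsup⟩ := Finset.exists_mem_eq_sup _ hfne Finset.card
      have hSind := (Finset.mem_filter.mp hSmem).2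
      rw [kIndepNum, hSsup]
      by_contra hlt
      push_neg at hlt
      have hcards : Sᶜ.card < X.card := by
        have h1 := Finset.card_add_card_compl S
        have h2 := Finset.card_add_card_compl X
        omega
      have hdel : delMaxDeg G Sᶜ ≤ delMaxDeg G X := by
        rw [delMaxDeg, compl_compl]
        exact Finset.sup_le hSind
      have hk'le : delMaxDeg G X ≤ sInf (Set.range F) := le_trans (le_max_left _ _) (le_of_eq hach)
      have hXle : X.card ≤ sInf (Set.range F) := le_trans (le_max_right _ _) (le_of_eq hach)
      have hach' : F Sᶜ = sInf (Set.range F) := by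
        refine le_antisymm ?_ (Nat.sInf_le ⟨Sᶜ, rfl⟩)
        simp only [hF]
        exact max_le (le_trans hdel hk'le) (le_trans (le_of_lt hcards) hXle)
      have := hmin Sᶜ hach'
      omega
end

section
/- For the grid graph P_2 □ P_m with m ≥ 6, every vertex subset X with |X| ≤ 2 satisfies Δ((P_2 □ P_m) − X) ≥ 3; hence min over X of max(Δ(G−X), |X|) equals 3 for G = P_2 □ P_m with m ≥ 6. -/
open scoped Classical

open SimpleGraph Finset

private lemma three_le_aux {V : Type*} [Fintype V] (G : SimpleGraph V) (X : Finset V)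
    (v w₁ w₂ w₃ : V) (hv : v ∉ X) (h1 : w₁ ∉ X) (h2 : w₂ ∉ X) (h3 : w₃ ∉ X)
    (ha1 : G.Adj v w₁) (ha2 : G.Adj v w₂) (ha3 : G.Adj v w₃)
    (n12 : w₁ ≠ w₂) (n13 : w₁ ≠ w₃) (n23 : w₂ ≠ w₃) :
    3 ≤ delMaxDeg G X := by
  have hsub : ({w₁, w₂, w₃} : Finset V) ⊆ (Xᶜ).filter fun w => G.Adj v w := by
    intro w hw
    simp only [Finset.mem_insert, Finset.mem_singleton] at hw
    rcases hw with rfl | rfl | rfl <;> rw [Finset.mem_filter, Finset.mem_compl] <;>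
      exact ⟨by assumption, by assumption⟩
  have hcard : ({w₁, w₂, w₃} : Finset V).card = 3 := by
    rw [Finset.card_insert_of_notMem (by simp [n12, n13]),
      Finset.card_insert_of_notMem (by simp [n23]), Finset.card_singleton]
  rw [delMaxDeg]
  calc 3 = ({w₁, w₂, w₃} : Finset V).card := hcard.symm
    _ ≤ ((Xᶜ).filter fun w => G.Adj v w).card := Finset.card_le_card hsub
    _ ≤ _ := Finset.le_sup (f := fun v => ((Xᶜ).filter fun w => G.Adj v w).card) (Finset.mem_compl.mpr hv)

private lemma core_check : ∀ (a₁ : Fin 2) (b₁ : Fin 6) (a₂ : Fin 2) (b₂ : Fin 6),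
    ∃ (c : Fin 2) (d : Fin 4),
      (¬((c.val = a₁.val ∧ (d.val+1 = b₁.val ∨ d.val+2 = b₁.val ∨ b₁.val + 1 = d.val + 1)) ∨ d.val+1 = b₁.val)) ∧
      (¬((c.val = a₂.val ∧ (d.val+1 = b₂.val ∨ d.val+2 = b₂.val ∨ b₂.val + 1 = d.val + 1)) ∨ d.val+1 = b₂.val)) := by
  decide

private lemma survive {m : ℕ} (p : Fin 2 × Fin m) (c : Fin 2) (d : ℕ) (hd : d ≤ 3)
    (h : ¬((c.val = p.1.val ∧ (d+1 = min p.2.val 5 ∨ d+2 = min p.2.val 5 ∨ min p.2.val 5 + 1 = d + 1)) ∨ d+1 = min p.2.val 5)) :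
    p.2.val ≠ d+1 ∧ (p.1.val = c.val → p.2.val ≠ d ∧ p.2.val ≠ d+2) := by
  push_neg at h
  obtain ⟨h1, h2⟩ := h
  by_cases hc : c.val = p.1.val
  · obtain ⟨h3, h4, h5⟩ := h1 hc
    exact ⟨by omega, fun _ => ⟨by omega, by omega⟩⟩
  · exact ⟨by omega, fun hp => absurd hp.symm hc⟩

private lemma two_cover {α : Type*} [DecidableEq α] [Inhabited α] (X : Finset α)
    (h : X.card ≤ 2) : ∃ p q : α, ∀ x ∈ X, x = p ∨ x = q := by
  interval_cases hc : X.card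
  · refine ⟨default, default, fun x hx => ?_⟩
    rw [Finset.card_eq_zero.mp hc] at hx
    exact absurd hx (Finset.notMem_empty x)
  · obtain ⟨a, ha⟩ := Finset.card_eq_one.mp hc
    refine ⟨a, a, fun x hx => ?_⟩
    rw [ha] at hx
    exact Or.inl (Finset.mem_singleton.mp hx)
  · obtain ⟨a, b, _, hab⟩ := Finset.card_eq_two.mp hc
    refine ⟨a, b, fun x hx => ?_⟩
    rw [hab] at hx
    simpa using hx

private lemma fin2_add_one_val (c : Fin 2) : (c + 1 : Fin 2).val = (c.val + 1) % 2 := by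
  rw [Fin.add_def]
  simp

private lemma row_adj (c : Fin 2) : (pathGraph 2).Adj c (c+1) := by
  rw [pathGraph_adj]
  have h := c.isLt
  have h2 := fin2_add_one_val c
  omega

private lemma fin2_add_one_ne (c : Fin 2) : c + 1 ≠ c := by
  intro h
  have := congrArg Fin.val h
  rw [fin2_add_one_val] at this
  have hlt := c.isLt
  omega

private lemma part1 {m : ℕ} (hm : 6 ≤ m) (X : Finset (Fin 2 × Fin m)) (hX : X.card ≤ 2) :
    3 ≤ delMaxDeg (SimpleGraph.boxProd (SimpleGraph.pathGraph 2) (SimpleGraph.pathGraph m)) X := by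
  have : Inhabited (Fin 2 × Fin m) := ⟨(0, ⟨0, by omega⟩)⟩
  obtain ⟨p, q, hpq⟩ := two_cover X hX
  obtain ⟨c, d, h1, h2⟩ := core_check p.1 ⟨min p.2.val 5, by omega⟩ q.1 ⟨min q.2.val 5, by omega⟩
  have hd : d.val ≤ 3 := by have := d.isLt; omega
  have hs1 := survive p c d.val hd h1
  have hs2 := survive q c d.val hd h2
  -- column-1-based nonmembership: any vertex with column value d+1 avoids X
  have notmemA : ∀ r : Fin 2, (r, (⟨d.val + 1, by omega⟩ : Fin m)) ∉ X := by
    intro r hmem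
    rcases hpq _ hmem with h | h
    · exact hs1.1 (congrArg (fun x : Fin 2 × Fin m => x.2.val) h).symm
    · exact hs2.1 (congrArg (fun x : Fin 2 × Fin m => x.2.val) h).symm
  have notmemB : ∀ (e : ℕ) (he : e < m), e = d.val ∨ e = d.val + 2 →
      (c, (⟨e, he⟩ : Fin m)) ∉ X := by
    intro e he hor hmem
    rcases hpq _ hmem with h | h
    · have hr : p.1.val = c.val := (congrArg (fun x : Fin 2 × Fin m => x.1.val) h).symm
      have hcol : p.2.val = e := (congrArg (fun x : Fin 2 × Fin m => x.2.val) h).symm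
      rcases hor with rfl | rfl
      · exact (hs1.2 hr).1 hcol
      · exact (hs1.2 hr).2 hcol
    · have hr : q.1.val = c.val := (congrArg (fun x : Fin 2 × Fin m => x.1.val) h).symm
      have hcol : q.2.val = e := (congrArg (fun x : Fin 2 × Fin m => x.2.val) h).symm
      rcases hor with rfl | rfl
      · exact (hs2.2 hr).1 hcol
      · exact (hs2.2 hr).2 hcol
  refine three_le_aux _ X (c, ⟨d.val + 1, by omega⟩) (c + 1, ⟨d.val + 1, by omega⟩)
    (c, ⟨d.val, by omega⟩) (c, ⟨d.val + 2, by omega⟩)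
    (notmemA c) (notmemA (c + 1))
    (notmemB d.val (by omega) (Or.inl rfl)) (notmemB (d.val + 2) (by omega) (Or.inr rfl))
    (Or.inl ⟨row_adj c, rfl⟩)
    (Or.inr ⟨by rw [pathGraph_adj]; right; rfl, rfl⟩)
    (Or.inr ⟨by rw [pathGraph_adj]; left; rfl, rfl⟩)
    ?_ ?_ ?_
  · intro h; exact fin2_add_one_ne c (congrArg Prod.fst h)
  · intro h; exact fin2_add_one_ne c (congrArg Prod.fst h)
  · intro h
    have := congrArg (fun x : Fin 2 × Fin m => x.2.val) h
    simp only at this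
    omega

private lemma deg_le {m : ℕ} (hm : 6 ≤ m) :
    delMaxDeg (SimpleGraph.boxProd (SimpleGraph.pathGraph 2) (SimpleGraph.pathGraph m))
      (∅ : Finset (Fin 2 × Fin m)) ≤ 3 := by
  rw [delMaxDeg]
  apply Finset.sup_le
  intro v _
  obtain ⟨v1, v2⟩ := v
  have hv2 := v2.isLt
  have hsub : (((∅ : Finset (Fin 2 × Fin m))ᶜ).filter fun w =>
      (SimpleGraph.boxProd (SimpleGraph.pathGraph 2) (SimpleGraph.pathGraph m)).Adj (v1, v2) w) ⊆
      {(v1 + 1, v2), (v1, ⟨v2.val - 1, by omega⟩), (v1, ⟨min (v2.val + 1) (m - 1), by omega⟩)} := by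
    intro w hw
    obtain ⟨w1, w2⟩ := w
    have hadj := (Finset.mem_filter.mp hw).2
    simp only [Finset.mem_insert, Finset.mem_singleton, Prod.mk.injEq]
    rcases hadj with ⟨hr, hc⟩ | ⟨hc, hr⟩
    · left
      rw [pathGraph_adj] at hr
      have h1 := v1.isLt
      have h2 := w1.isLt
      have h3 := fin2_add_one_val v1
      simp only at hr hc
      exact ⟨(Fin.ext (by omega)).symm, hc.symm⟩
    · rw [pathGraph_adj] at hc
      have h2 := w2.isLt
      simp only at hr hc
      rcases hc with h | h
      · right; right
        exact ⟨hr.symm, (Fin.ext (by simp only [Fin.val]; omega)).symm⟩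
      · right; left
        exact ⟨hr.symm, (Fin.ext (by simp only [Fin.val]; omega)).symm⟩
  refine le_trans (Finset.card_le_card hsub) ?_
  refine le_trans (Finset.card_insert_le _ _) (Nat.succ_le_succ ?_)
  exact le_trans (Finset.card_insert_le _ _) (Nat.succ_le_succ (Finset.card_singleton _).le)

/-- For the grid `P_2 □ P_m` with `m ≥ 6`, deleting any set of at most two vertices leaves
a graph of maximum degree at least `3`; hence `min_X max(Δ(G−X), |X|) = 3`. -/
theorem grid_two_rows_min_max_del {m : ℕ} (hm : 6 ≤ m) :
    (∀ X : Finset (Fin 2 × Fin m), X.card ≤ 2 →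
      3 ≤ delMaxDeg (SimpleGraph.boxProd (SimpleGraph.pathGraph 2) (SimpleGraph.pathGraph m)) X) ∧
    sInf (Set.range fun X : Finset (Fin 2 × Fin m) =>
        max (delMaxDeg (SimpleGraph.boxProd (SimpleGraph.pathGraph 2)
          (SimpleGraph.pathGraph m)) X) X.card) = 3 := by
  refine ⟨fun X hX => part1 hm X hX, ?_⟩
  have hmem : (3 : ℕ) ∈ Set.range fun X : Finset (Fin 2 × Fin m) =>
      max (delMaxDeg (SimpleGraph.boxProd (SimpleGraph.pathGraph 2)
        (SimpleGraph.pathGraph m)) X) X.card := by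
    refine ⟨∅, ?_⟩
    simp only [Finset.card_empty, Nat.max_eq_left (Nat.zero_le _)]
    exact le_antisymm (deg_le hm) (part1 hm ∅ (by simp))
  refine le_antisymm (Nat.sInf_le hmem) (le_csInf ⟨3, hmem⟩ ?_)
  rintro y ⟨X, rfl⟩
  rcases le_or_gt X.card 2 with h | h
  · exact le_trans (part1 hm X h) (le_max_left _ _)
  · exact le_trans h (le_max_right _ _)
end

section
/- For n ≥ 4 and m ≥ 1, the torus/cylinder graph C_n □ P_m has domination number at most 3 if and only if (n = 4 and m ≤ 3) or (n = 5 and m ≤ 2) or (6 ≤ n ≤ 9 and m = 1). -/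
open scoped Classical

/-- The domination number `γ(G)`: the least size of a set `X` of vertices such that every
vertex is in `X` or has a neighbor in `X`. -/
noncomputable def domNum {V : Type*} [Fintype V] (G : SimpleGraph V) : ℕ :=
  sInf {k | ∃ X : Finset V, X.card = k ∧ ∀ v : V, v ∈ X ∨ ∃ w ∈ X, G.Adj v w}

/-!
Every vertex of `C_n □ P_m` has degree at most `2 + min 2 (m - 1)`, so three closed
neighbourhoods cover at most `3 * (3 + min 2 (m - 1))` of the `n * m` vertices. For `n ≥ 4` this
leaves only finitely many shapes, which are settled by exhaustive search over triples of
vertices; the counting bound is sharp except for `C_6 □ P_2` and `C_5 □ P_3`, where a dominating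
triple would have to be a perfect code and none exists.
-/

namespace SimpleGraph

variable {V : Type*}

def IsDominating (G : SimpleGraph V) (X : Finset V) : Prop :=
  ∀ v, v ∈ X ∨ ∃ w ∈ X, G.Adj v w

instance [Fintype V] [DecidableEq V] (G : SimpleGraph V) [DecidableRel G.Adj] :
    DecidablePred G.IsDominating :=
  fun _ => inferInstanceAs (Decidable (∀ _, _))

instance boxProdDecidableRelAdj {α β : Type*} (G : SimpleGraph α) (H : SimpleGraph β)
    [DecidableEq α] [DecidableEq β] [DecidableRel G.Adj] [DecidableRel H.Adj] :
    DecidableRel (G □ H).Adj :=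
  fun _ _ => decidable_of_iff' _ boxProd_adj

instance pathGraphDecidableRelAdj (n : ℕ) : DecidableRel (pathGraph n).Adj :=
  fun _ _ => decidable_of_iff' _ pathGraph_adj

theorem domNum_le_iff [Fintype V] (G : SimpleGraph V) {k : ℕ} :
    domNum G ≤ k ↔ ∃ X : Finset V, X.card ≤ k ∧ G.IsDominating X := by
  set S := {k | ∃ X : Finset V, X.card = k ∧ G.IsDominating X}
  constructor
  · intro h
    have hne : S.Nonempty := ⟨_, Finset.univ, rfl, fun v => Or.inl (Finset.mem_univ v)⟩
    obtain ⟨X, hcard, hX⟩ := Nat.sInf_mem hne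
    exact ⟨X, hcard.trans_le h, hX⟩
  · rintro ⟨X, hle, hX⟩
    exact (Nat.sInf_le (show X.card ∈ S from ⟨X, rfl, hX⟩)).trans hle

theorem IsDominating.nonempty [Nonempty V] {G : SimpleGraph V} {X : Finset V}
    (hX : G.IsDominating X) : X.Nonempty := by
  obtain h | ⟨w, hw, -⟩ := hX (Classical.arbitrary V)
  exacts [⟨_, h⟩, ⟨w, hw⟩]

theorem _root_.Finset.exists_eq_insert_insert_singleton_of_card_le_three [DecidableEq V]
    {X : Finset V} (hne : X.Nonempty) (hcard : X.card ≤ 3) : ∃ a b c, X = {a, b, c} := by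
  obtain h | h | h : X.card = 1 ∨ X.card = 2 ∨ X.card = 3 := by
    have := hne.card_pos
    omega
  · obtain ⟨a, rfl⟩ := Finset.card_eq_one.mp h
    exact ⟨a, a, a, by simp⟩
  · obtain ⟨a, b, -, rfl⟩ := Finset.card_eq_two.mp h
    exact ⟨a, a, b, by simp⟩
  · obtain ⟨a, b, c, -, -, -, rfl⟩ := Finset.card_eq_three.mp h
    exact ⟨a, b, c, rfl⟩

theorem domNum_le_three_iff [Fintype V] [Nonempty V] [DecidableEq V] (G : SimpleGraph V) :
    domNum G ≤ 3 ↔ ∃ a b c : V, G.IsDominating {a, b, c} := by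
  rw [domNum_le_iff]
  constructor
  · rintro ⟨X, hcard, hX⟩
    obtain ⟨a, b, c, rfl⟩ :=
      Finset.exists_eq_insert_insert_singleton_of_card_le_three hX.nonempty hcard
    exact ⟨a, b, c, hX⟩
  · rintro ⟨a, b, c, hX⟩
    exact ⟨_, Finset.card_le_three, hX⟩

theorem IsDominating.card_le [Fintype V] {G : SimpleGraph V} [G.LocallyFinite] {X : Finset V}
    (hX : G.IsDominating X) {d : ℕ} (hd : ∀ v, G.degree v ≤ d) :
    Fintype.card V ≤ X.card * (d + 1) := by
  classical
  have hcover : Finset.univ ⊆ X.biUnion fun x => insert x (G.neighborFinset x) := by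
    intro v _
    rw [Finset.mem_biUnion]
    obtain h | ⟨w, hw, hadj⟩ := hX v
    · exact ⟨v, h, Finset.mem_insert_self _ _⟩
    · exact ⟨w, hw, Finset.mem_insert_of_mem ((G.mem_neighborFinset _ _).mpr hadj.symm)⟩
  calc Fintype.card V = Finset.univ.card := Finset.card_univ.symm
    _ ≤ _ := Finset.card_le_card hcover
    _ ≤ X.card * (d + 1) := Finset.card_biUnion_le_card_mul _ _ _ fun x _ =>
        (Finset.card_insert_le _ _).trans (Nat.succ_le_succ (hd x))

theorem card_le_mul_of_domNum_le [Fintype V] (G : SimpleGraph V) [G.LocallyFinite] {k d : ℕ}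
    (hk : domNum G ≤ k) (hd : ∀ v, G.degree v ≤ d) : Fintype.card V ≤ k * (d + 1) := by
  obtain ⟨X, hcard, hX⟩ := (domNum_le_iff G).mp hk
  exact (hX.card_le hd).trans (Nat.mul_le_mul_right _ hcard)

theorem cycleGraph_degree_le_two {n : ℕ} (v : Fin n) : (cycleGraph n).degree v ≤ 2 := by
  match n with
  | 0 => exact v.elim0
  | 1 => simp [cycleGraph_one_eq_bot]
  | n + 2 => exact cycleGraph_degree_two_le ▸ Finset.card_le_two

theorem pathGraph_degree_le {m : ℕ} (v : Fin m) : (pathGraph m).degree v ≤ min 2 (m - 1) :=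
  le_min ((degree_le_of_le pathGraph_le_cycleGraph).trans (cycleGraph_degree_le_two v))
    (Nat.le_sub_one_of_lt ((pathGraph m).degree_lt_card_verts v |>.trans_eq (Fintype.card_fin m)))

theorem cycleGraph_boxProd_pathGraph_degree_le {n m : ℕ} (v : Fin n × Fin m) :
    (cycleGraph n □ pathGraph m).degree v ≤ 2 + min 2 (m - 1) := by
  rw [degree_boxProd]
  exact add_le_add (cycleGraph_degree_le_two v.1) (pathGraph_degree_le v.2)

theorem dims_of_domNum_cycleGraph_boxProd_pathGraph_le_three {n m : ℕ} (hn : 4 ≤ n)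
    (hm : 1 ≤ m) (h : domNum (cycleGraph n □ pathGraph m) ≤ 3) :
    (m = 1 ∧ n ≤ 9) ∨ (m = 2 ∧ n ≤ 6) ∨ (m = 3 ∧ n ≤ 5) := by
  have hcard := card_le_mul_of_domNum_le _ h fun v => by
    convert cycleGraph_boxProd_pathGraph_degree_le v
  rw [Fintype.card_prod, Fintype.card_fin, Fintype.card_fin] at hcard
  obtain rfl | rfl | rfl | hm4 : m = 1 ∨ m = 2 ∨ m = 3 ∨ 4 ≤ m := by omega
  · omega
  · omega
  · omega
  · rw [min_eq_left (by omega)] at hcard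
    nlinarith

theorem not_domNum_cycleGraph_six_boxProd_pathGraph_two_le_three :
    ¬ domNum (cycleGraph 6 □ pathGraph 2) ≤ 3 := by
  rw [domNum_le_three_iff]
  decide +kernel

theorem not_domNum_cycleGraph_five_boxProd_pathGraph_three_le_three :
    ¬ domNum (cycleGraph 5 □ pathGraph 3) ≤ 3 := by
  rw [domNum_le_three_iff]
  decide +kernel

end SimpleGraph

/-- For `n ≥ 4`, `m ≥ 1`, `γ(C_n □ P_m) ≤ 3` iff `(n = 4 ∧ m ≤ 3)`, `(n = 5 ∧ m ≤ 2)`,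
or `(6 ≤ n ≤ 9 ∧ m = 1)`. -/
theorem domNum_cylinder_le_three_iff (n m : ℕ) (hn : 4 ≤ n) (hm : 1 ≤ m) :
    domNum (SimpleGraph.boxProd (SimpleGraph.cycleGraph n) (SimpleGraph.pathGraph m)) ≤ 3 ↔
      (n = 4 ∧ m ≤ 3) ∨ (n = 5 ∧ m ≤ 2) ∨ (6 ≤ n ∧ n ≤ 9 ∧ m = 1) := by
  constructor
  · intro h
    rcases SimpleGraph.dims_of_domNum_cycleGraph_boxProd_pathGraph_le_three hn hm h with
      ⟨rfl, hn9⟩ | ⟨rfl, hn6⟩ | ⟨rfl, hn5⟩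
    · omega
    · obtain hn6 | rfl := hn6.lt_or_eq
      · omega
      · exact absurd h SimpleGraph.not_domNum_cycleGraph_six_boxProd_pathGraph_two_le_three
    · obtain hn5 | rfl := hn5.lt_or_eq
      · omega
      · exact absurd h SimpleGraph.not_domNum_cycleGraph_five_boxProd_pathGraph_three_le_three
  · rintro (⟨rfl, hm3⟩ | ⟨rfl, hm2⟩ | ⟨hn6, hn9, rfl⟩) <;>
      [interval_cases m; interval_cases m; interval_cases n] <;>
      rw [SimpleGraph.domNum_le_three_iff] <;> decide
end

section
/- For m ≥ n ≥ 1, the grid graph P_n □ P_m has domination number at most 3 if and only if (n = 1 and m ≤ 9) or (n = 2 and 2 ≤ m ≤ 5) or (n = m = 3). -/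
open scoped Classical

/-- Concrete decidable adjacency for grid graphs. -/
def gAdj (n m : ℕ) (x y : Fin n × Fin m) : Prop :=
  ((x.1.val + 1 = y.1.val ∨ y.1.val + 1 = x.1.val) ∧ x.2 = y.2) ∨
    ((x.2.val + 1 = y.2.val ∨ y.2.val + 1 = x.2.val) ∧ x.1 = y.1)

instance (n m : ℕ) (x y : Fin n × Fin m) : Decidable (gAdj n m x y) := by
  unfold gAdj; infer_instance

lemma gAdj_iff (n m : ℕ) (x y : Fin n × Fin m) :
    (SimpleGraph.boxProd (SimpleGraph.pathGraph n) (SimpleGraph.pathGraph m)).Adj x y ↔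
      gAdj n m x y := by
  simp [SimpleGraph.boxProd_adj, SimpleGraph.pathGraph_adj, gAdj]

lemma cover3 {α : Type*} (X : Finset α) (h : X.card ≤ 3) (hne : X.Nonempty) :
    ∃ a b c, ∀ x ∈ X, x = a ∨ x = b ∨ x = c := by
  interval_cases hc : X.card
  · rw [Finset.card_eq_zero] at hc; subst hc; exact absurd hne (by simp)
  · obtain ⟨a, rfl⟩ := Finset.card_eq_one.1 hc
    exact ⟨a, a, a, fun x hx => by simp at hx; tauto⟩
  · obtain ⟨a, b, -, rfl⟩ := Finset.card_eq_two.1 hc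
    exact ⟨a, b, b, fun x hx => by simp at hx; tauto⟩
  · obtain ⟨a, b, c, -, -, -, rfl⟩ := Finset.card_eq_three.1 hc
    exact ⟨a, b, c, fun x hx => by simp at hx; tauto⟩

lemma domNum_le_three_iff {V : Type*} [Fintype V] [Nonempty V] (G : SimpleGraph V) :
    domNum G ≤ 3 ↔
      ∃ a b c : V, ∀ v : V, (v = a ∨ v = b ∨ v = c) ∨ G.Adj v a ∨ G.Adj v b ∨ G.Adj v c := by
  set S := {k | ∃ X : Finset V, X.card = k ∧ ∀ v : V, v ∈ X ∨ ∃ w ∈ X, G.Adj v w} with hS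
  have hSne : S.Nonempty := ⟨(Finset.univ : Finset V).card,
    Finset.univ, rfl, fun v => Or.inl (Finset.mem_univ v)⟩
  constructor
  · intro h3
    obtain ⟨X, hcard, hdom⟩ := Nat.sInf_mem hSne
    have hX3 : X.card ≤ 3 := by rw [hcard]; exact h3
    have hXne : X.Nonempty := Finset.nonempty_iff_ne_empty.2 (by
      rintro rfl
      obtain ⟨v⟩ := ‹Nonempty V›
      rcases hdom v with hv | ⟨w, hw, -⟩ <;> simp_all)
    obtain ⟨a, b, c, hcov⟩ := cover3 X hX3 hXne
    refine ⟨a, b, c, fun v => ?_⟩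
    rcases hdom v with hv | ⟨w, hw, hadj⟩
    · exact Or.inl (hcov v hv)
    · rcases hcov w hw with rfl | rfl | rfl
      · exact Or.inr (Or.inl hadj)
      · exact Or.inr (Or.inr (Or.inl hadj))
      · exact Or.inr (Or.inr (Or.inr hadj))
  · rintro ⟨a, b, c, hd⟩
    have hmem : ({a, b, c} : Finset V).card ∈ S := by
      refine ⟨{a, b, c}, rfl, fun v => ?_⟩
      rcases hd v with (rfl | rfl | rfl) | h | h | h
      · exact Or.inl (by simp)
      · exact Or.inl (by simp)
      · exact Or.inl (by simp)
      · exact Or.inr ⟨a, by simp, h⟩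
      · exact Or.inr ⟨b, by simp, h⟩
      · exact Or.inr ⟨c, by simp, h⟩
    have hc : ({a, b, c} : Finset V).card ≤ 3 :=
      (Finset.card_insert_le _ _).trans (Nat.succ_le_succ
        ((Finset.card_insert_le _ _).trans (Nat.succ_le_succ (Finset.card_singleton c).le)))
    exact (Nat.sInf_le hmem).trans hc

/-- closed neighborhood in the concrete grid. -/
def cN (n m : ℕ) (x : Fin n × Fin m) : Finset (Fin n × Fin m) :=
  Finset.univ.filter (fun v => v = x ∨ gAdj n m v x)

/-- line neighbors in a path coordinate -/
def lN (n : ℕ) (a : Fin n) : Finset (Fin n) :=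
  Finset.univ.filter (fun a' => a'.val + 1 = a.val ∨ a.val + 1 = a'.val)

lemma cN_card_le (n m R S : ℕ)
    (hR : ∀ a : Fin n, (lN n a).card ≤ R) (hS : ∀ b : Fin m, (lN m b).card ≤ S)
    (x : Fin n × Fin m) : (cN n m x).card ≤ 1 + R + S := by
  have hsub : cN n m x ⊆
      insert x (((lN n x.1).image (fun a => (a, x.2))) ∪ ((lN m x.2).image (fun b => (x.1, b)))) := by
    intro v hv
    simp only [cN, Finset.mem_filter] at hv
    rcases hv.2 with rfl | h
    · exact Finset.mem_insert_self _ _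
    · rcases h with ⟨h1, h2⟩ | ⟨h1, h2⟩
      · refine Finset.mem_insert_of_mem (Finset.mem_union_left _ ?_)
        refine Finset.mem_image.2 ⟨v.1, ?_, by rw [← h2]⟩
        simp [lN]; tauto
      · refine Finset.mem_insert_of_mem (Finset.mem_union_right _ ?_)
        refine Finset.mem_image.2 ⟨v.2, ?_, by rw [← h2]⟩
        simp [lN]; tauto
  calc (cN n m x).card ≤ _ := Finset.card_le_card hsub
    _ ≤ 1 + (((lN n x.1).image (fun a => (a, x.2))) ∪
          ((lN m x.2).image (fun b => (x.1, b)))).card := by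
        have := Finset.card_insert_le x (((lN n x.1).image (fun a => (a, x.2))) ∪
          ((lN m x.2).image (fun b => (x.1, b))))
        omega
    _ ≤ 1 + (((lN n x.1).image (fun a => (a, x.2))).card +
          ((lN m x.2).image (fun b => (x.1, b))).card) := by
        have := Finset.card_union_le ((lN n x.1).image (fun a => (a, x.2)))
          ((lN m x.2).image (fun b => (x.1, b)))
        omega
    _ ≤ 1 + R + S := by
        have h1 := (Finset.card_image_le (s := lN n x.1) (f := fun a => (a, x.2))).trans (hR x.1)
        have h2 := (Finset.card_image_le (s := lN m x.2) (f := fun b => (x.1, b))).trans (hS x.2)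
        omega

lemma counting (n m R S : ℕ)
    (hR : ∀ a : Fin n, (lN n a).card ≤ R) (hS : ∀ b : Fin m, (lN m b).card ≤ S)
    (a b c : Fin n × Fin m)
    (hdom : ∀ v : Fin n × Fin m, (v = a ∨ v = b ∨ v = c) ∨
      gAdj n m v a ∨ gAdj n m v b ∨ gAdj n m v c) :
    n * m ≤ 3 * (1 + R + S) := by
  have hsub : (Finset.univ : Finset (Fin n × Fin m)) ⊆ cN n m a ∪ cN n m b ∪ cN n m c := by
    intro v _
    simp only [Finset.mem_union, cN, Finset.mem_filter, Finset.mem_univ, true_and]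
    rcases hdom v with (h | h | h) | h | h | h <;> tauto
  have hcardV : (Finset.univ : Finset (Fin n × Fin m)).card = n * m := by
    simp [Finset.card_univ]
  have h1 := Finset.card_le_card hsub
  have h2 := Finset.card_union_le (cN n m a ∪ cN n m b) (cN n m c)
  have h3 := Finset.card_union_le (cN n m a) (cN n m b)
  have ha := cN_card_le n m R S hR hS a
  have hb := cN_card_le n m R S hR hS b
  have hc := cN_card_le n m R S hR hS c
  omega

lemma lN_general (n : ℕ) : ∀ a : Fin n, (lN n a).card ≤ 2 := by
  intro a
  have hsub : (lN n a).image Fin.val ⊆ ({a.val - 1, a.val + 1} : Finset ℕ) := by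
    intro x hx
    simp only [Finset.mem_image] at hx
    obtain ⟨a', ha', rfl⟩ := hx
    simp only [lN, Finset.mem_filter] at ha'
    simp; omega
  have h1 : (lN n a).card = ((lN n a).image Fin.val).card :=
    (Finset.card_image_of_injective _ Fin.val_injective).symm
  have h2 := Finset.card_le_card hsub
  have h3 : ({a.val - 1, a.val + 1} : Finset ℕ).card ≤ 2 := Finset.card_insert_le _ _ |>.trans (by simp)
  omega

lemma no26 : ¬ ∃ a b c : Fin 2 × Fin 6, ∀ v : Fin 2 × Fin 6,
    (v = a ∨ v = b ∨ v = c) ∨ gAdj 2 6 v a ∨ gAdj 2 6 v b ∨ gAdj 2 6 v c := by decide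

lemma no34 : ¬ ∃ a b c : Fin 3 × Fin 4, ∀ v : Fin 3 × Fin 4,
    (v = a ∨ v = b ∨ v = c) ∨ gAdj 3 4 v a ∨ gAdj 3 4 v b ∨ gAdj 3 4 v c := by decide

lemma no35 : ¬ ∃ a b c : Fin 3 × Fin 5, ∀ v : Fin 3 × Fin 5,
    (v = a ∨ v = b ∨ v = c) ∨ gAdj 3 5 v a ∨ gAdj 3 5 v b ∨ gAdj 3 5 v c := by decide

/-- For `m ≥ n ≥ 1`, `γ(P_n □ P_m) ≤ 3` iff `(n = 1 ∧ m ≤ 9)`, `(n = 2 ∧ 2 ≤ m ≤ 5)`,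
or `(n = m = 3)`. -/
theorem domNum_grid_le_three_iff (n m : ℕ) (hn : 1 ≤ n) (hnm : n ≤ m) :
    domNum (SimpleGraph.boxProd (SimpleGraph.pathGraph n) (SimpleGraph.pathGraph m)) ≤ 3 ↔
      (n = 1 ∧ m ≤ 9) ∨ (n = 2 ∧ 2 ≤ m ∧ m ≤ 5) ∨ (n = 3 ∧ m = 3) := by
  have key : domNum (SimpleGraph.boxProd (SimpleGraph.pathGraph n) (SimpleGraph.pathGraph m)) ≤ 3 ↔
      (∃ a b c : Fin n × Fin m, ∀ v : Fin n × Fin m,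
      (v = a ∨ v = b ∨ v = c) ∨ gAdj n m v a ∨ gAdj n m v b ∨ gAdj n m v c) := by
    haveI : Nonempty (Fin n × Fin m) :=
      ⟨(⟨0, by omega⟩, ⟨0, by omega⟩)⟩
    rw [domNum_le_three_iff]
    simp only [gAdj_iff]
  rw [key]
  have lN1 : ∀ a : Fin 1, (lN 1 a).card ≤ 0 := by decide
  have lN2 : ∀ a : Fin 2, (lN 2 a).card ≤ 1 := by decide
  constructor
  · rintro ⟨a, b, c, hdom⟩
    have h15 : n * m ≤ 15 := by
      have := counting n m 2 2 (lN_general n) (lN_general m) a b c hdom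
      omega
    have hn3 : n ≤ 3 := by
      by_contra h4
      push_neg at h4
      have : 4 * 4 ≤ n * m := Nat.mul_le_mul h4 (le_trans h4 hnm)
      omega
    interval_cases n
    · have := counting 1 m 0 2 lN1 (lN_general m) a b c hdom
      exact Or.inl ⟨rfl, by omega⟩
    · have h12 : 2 * m ≤ 12 := counting 2 m 1 2 lN2 (lN_general m) a b c hdom
      have hm6 : m ≤ 6 := by omega
      interval_cases m
      · exact Or.inr (Or.inl ⟨rfl, by omega, by omega⟩)
      · exact Or.inr (Or.inl ⟨rfl, by omega, by omega⟩)
      · exact Or.inr (Or.inl ⟨rfl, by omega, by omega⟩)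
      · exact Or.inr (Or.inl ⟨rfl, by omega, by omega⟩)
      · exact absurd ⟨a, b, c, hdom⟩ no26
    · have hm5 : m ≤ 5 := by omega
      interval_cases m
      · exact Or.inr (Or.inr ⟨rfl, rfl⟩)
      · exact absurd ⟨a, b, c, hdom⟩ no34
      · exact absurd ⟨a, b, c, hdom⟩ no35
  · rintro (⟨rfl, h9⟩ | ⟨rfl, h2, h5⟩ | ⟨rfl, rfl⟩)
    · interval_cases m
      · exact ⟨(0, 0), (0, 0), (0, 0), by decide⟩
      · exact ⟨(0, 0), (0, 0), (0, 0), by decide⟩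
      · exact ⟨(0, 0), (0, 0), (0, 1), by decide⟩
      · exact ⟨(0, 0), (0, 0), (0, 2), by decide⟩
      · exact ⟨(0, 0), (0, 0), (0, 3), by decide⟩
      · exact ⟨(0, 0), (0, 1), (0, 4), by decide⟩
      · exact ⟨(0, 0), (0, 2), (0, 5), by decide⟩
      · exact ⟨(0, 0), (0, 3), (0, 6), by decide⟩
      · exact ⟨(0, 1), (0, 4), (0, 7), by decide⟩
    · interval_cases m
      · exact ⟨(0, 0), (0, 0), (0, 1), by decide⟩
      · exact ⟨(0, 0), (0, 0), (1, 2), by decide⟩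
      · exact ⟨(0, 0), (0, 1), (1, 3), by decide⟩
      · exact ⟨(0, 0), (0, 4), (1, 2), by decide⟩
    · exact ⟨(0, 0), (0, 2), (2, 1), by decide⟩
end

section
/- For the caterpillar T_{m,ℓ} with 1 ≤ ℓ and ⌊m/2⌋ ≤ ℓ < m, the set Y consisting of the even-indexed spine vertices v_2, v_4, …, v_{2⌊m/2⌋} together with ℓ − ⌊m/2⌋ additional arbitrary vertices satisfies |Y| = ℓ and Δ(T_{m,ℓ} − Y) ≤ ℓ. -/
open scoped Classical

/-- The caterpillar `T_{m,ℓ}`: spine vertices `Sum.inl i` (`v_{i+1}` for `i : Fin m`, forming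
a path) with exactly `ℓ` pendant leaves `Sum.inr (i, t)` attached to each spine vertex. -/
def caterpillar (m l : ℕ) : SimpleGraph (Fin m ⊕ Fin m × Fin l) :=
  SimpleGraph.fromRel fun a b =>
    match a, b with
    | Sum.inl i, Sum.inl j => (i : ℕ) + 1 = (j : ℕ)
    | Sum.inl i, Sum.inr p => i = p.1
    | _, _ => False

/-- The even-indexed spine vertices `v_2, v_4, …, v_{2⌊m/2⌋}` of `T_{m,ℓ}`
(0-based: spine vertices with odd index). -/
noncomputable def evenSpine (m l : ℕ) : Finset (Fin m ⊕ Fin m × Fin l) :=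
  Finset.univ.filter fun a => ∃ i : Fin m, a = Sum.inl i ∧ (i : ℕ) % 2 = 1

lemma range_filter_odd (m : ℕ) :
    ((Finset.range m).filter fun n => n % 2 = 1).card = m / 2 := by
  induction m with
  | zero => simp
  | succ m ih =>
    rw [Finset.range_add_one, Finset.filter_insert]
    rcases Nat.mod_two_eq_zero_or_one m with h | h
    · rw [if_neg (by omega : ¬ m % 2 = 1), ih]
      omega
    · rw [if_pos h, Finset.card_insert_of_notMem (by simp), ih]
      omega

lemma evenSpine_card (m l : ℕ) : (evenSpine m l).card = m / 2 := by
  classical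
  rw [← range_filter_odd m]
  apply Finset.card_bij (fun a _ => (Sum.elim (fun i : Fin m => (i : ℕ)) (fun _ => 0)) a)
  · rintro a ha
    simp only [evenSpine, Finset.mem_filter] at ha
    obtain ⟨_, i, rfl, hi⟩ := ha
    simp [Finset.mem_filter, Finset.mem_range, i.isLt, hi]
  · rintro a ha b hb hab
    simp only [evenSpine, Finset.mem_filter] at ha hb
    obtain ⟨_, i, rfl, _⟩ := ha
    obtain ⟨_, j, rfl, _⟩ := hb
    simp only [Sum.elim_inl] at hab
    exact congrArg Sum.inl (Fin.ext hab)
  · rintro n hn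
    simp only [Finset.mem_filter, Finset.mem_range] at hn
    refine ⟨Sum.inl ⟨n, hn.1⟩, ?_, rfl⟩
    simp [evenSpine, hn.2]

lemma delMaxDeg_le {V : Type*} [Fintype V] (G : SimpleGraph V) (X : Finset V) (l : ℕ)
    (h : ∀ v ∉ X, Set.ncard {w | w ∉ X ∧ G.Adj v w} ≤ l) :
    delMaxDeg G X ≤ l := by
  classical
  apply Finset.sup_le
  intro v hv
  rw [Finset.mem_compl] at hv
  refine le_trans (le_of_eq ?_) (h v hv)
  rw [Set.ncard_eq_toFinset_card']
  congr 1
  ext w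
  simp [Set.mem_toFinset]

/-- For `⌊m/2⌋ ≤ ℓ < m`, the set `Y` consisting of the even-indexed spine vertices together
with `ℓ − ⌊m/2⌋` arbitrary additional vertices satisfies `|Y| = ℓ` and `Δ(T_{m,ℓ} − Y) ≤ ℓ`. -/
theorem caterpillar_evenSpine_del (m l : ℕ) (hl : 1 ≤ l) (h1 : m / 2 ≤ l) (h2 : l < m)
    (A : Finset (Fin m ⊕ Fin m × Fin l)) (hA : Disjoint A (evenSpine m l))
    (hAcard : A.card = l - m / 2) :
    (evenSpine m l ∪ A).card = l ∧
    delMaxDeg (caterpillar m l) (evenSpine m l ∪ A) ≤ l := by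
  classical
  have hcard : (evenSpine m l ∪ A).card = l := by
    rw [Finset.card_union_of_disjoint hA.symm, evenSpine_card, hAcard]
    omega
  refine ⟨hcard, ?_⟩
  apply delMaxDeg_le
  intro v hv
  rw [Finset.mem_union, not_or] at hv
  obtain ⟨hvE, hvA⟩ := hv
  rcases v with i | p
  · have hi : (i : ℕ) % 2 = 0 := by
      by_contra h
      apply hvE
      simp only [evenSpine, Finset.mem_filter]
      exact ⟨Finset.mem_univ _, i, rfl, by omega⟩
    have hsub : {w | w ∉ evenSpine m l ∪ A ∧ (caterpillar m l).Adj (Sum.inl i) w} ⊆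
        Set.range (fun t : Fin l => (Sum.inr (i, t) : Fin m ⊕ Fin m × Fin l)) := by
      rintro w ⟨hwY, hadj⟩
      rw [Finset.mem_union, not_or] at hwY
      obtain ⟨hwE, hwA⟩ := hwY
      rw [caterpillar, SimpleGraph.fromRel_adj] at hadj
      obtain ⟨hne, hrel⟩ := hadj
      rcases w with j | p
      · exfalso
        apply hwE
        simp only [evenSpine, Finset.mem_filter]
        refine ⟨Finset.mem_univ _, j, rfl, ?_⟩
        simp only at hrel
        omega
      · simp only at hrel
        have : i = p.1 := by tauto
        exact ⟨p.2, by rw [this]⟩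
    refine le_trans (Set.ncard_le_ncard hsub (Set.toFinite _)) ?_
    have : (Set.range (fun t : Fin l => (Sum.inr (i, t) : Fin m ⊕ Fin m × Fin l))).ncard ≤
        (Set.univ : Set (Fin l)).ncard := by
      rw [← Set.image_univ]
      exact Set.ncard_image_le (Set.toFinite _)
    refine le_trans this ?_
    simp [Set.ncard_univ]
  · have hsub : {w | w ∉ evenSpine m l ∪ A ∧ (caterpillar m l).Adj (Sum.inr p) w} ⊆
        ({Sum.inl p.1} : Set (Fin m ⊕ Fin m × Fin l)) := by
      rintro w ⟨hwY, hadj⟩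
      rw [caterpillar, SimpleGraph.fromRel_adj] at hadj
      obtain ⟨hne, hrel⟩ := hadj
      rcases w with j | q
      · simp only at hrel
        have : j = p.1 := by tauto
        simp [this]
      · simp only at hrel; tauto
    refine le_trans (Set.ncard_le_ncard hsub (Set.toFinite _)) ?_
    simp [hl]
end

section
/- If m ≥ n ≥ 3 with n = 3 and m ≥ 5, or m ≥ n ≥ 4, then for every vertex subset X of P_n □ P_m with |X| ≤ 2 we have Δ((P_n □ P_m) − X) ≥ 3; i.e., min over X of max(Δ(G−X), |X|) > 2 for such grids. -/
/-!
A vertex whose closed neighbourhood avoids `X` keeps its full degree in `G − X`. In the grid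
`P_n □ P_m` every closed neighbourhood has at most `5` vertices and only the `4` corners have
degree below `3`. Two deleted vertices therefore spoil at most `10` vertices, and since
`n * m ≥ 15` some non-corner vertex survives together with all of its at least `3` neighbours.
-/

open scoped Classical

open Finset SimpleGraph

lemma lt_sInf_range_max_card {V : Type*} (f : Finset V → ℕ) {k : ℕ}
    (hf : ∀ X : Finset V, #X ≤ k → k < f X) :
    k < sInf (Set.range fun X => max (f X) #X) := by
  obtain ⟨X, hX⟩ := Nat.sInf_mem (Set.range_nonempty fun X => max (f X) #X)
  rw [← hX]
  by_cases hXk : #X ≤ k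
  · exact (hf X hXk).trans_le (le_max_left _ _)
  · exact (not_le.mp hXk).trans_le (le_max_right _ _)

namespace SimpleGraph

section DeleteVertices

variable {V : Type*} [Fintype V] (G : SimpleGraph V) [G.LocallyFinite]

lemma degree_le_delMaxDeg {X : Finset V} {v : V} (hv : v ∉ X) (hX : ∀ w, G.Adj v w → w ∉ X) :
    G.degree v ≤ delMaxDeg G X := by
  refine (card_le_card fun w hw => ?_).trans
    (le_sup (f := fun v => ((Xᶜ).filter fun w => G.Adj v w).card) (mem_compl.mpr hv))
  rw [mem_neighborFinset] at hw
  exact mem_filter.mpr ⟨mem_compl.mpr (hX w hw), hw⟩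

lemma le_delMaxDeg_of_card_lt {X : Finset V} {d k : ℕ} (hd : ∀ v, G.degree v ≤ d)
    (hcard : #X * (d + 1) + #{v | G.degree v < k} < Fintype.card V) :
    k ≤ delMaxDeg G X := by
  set closedNbhds := X.biUnion fun x => insert x (G.neighborFinset x)
  have hclosed : #closedNbhds ≤ #X * (d + 1) :=
    card_biUnion_le_card_mul _ _ _ fun x _ => (card_insert_le _ _).trans (by simpa using hd x)
  have hsplit := card_filter_add_card_filter_not (s := univ) (fun v => k ≤ G.degree v)
  simp only [not_le, card_univ] at hsplit
  obtain ⟨v, hvk, hv⟩ := exists_mem_notMem_of_card_lt_card (s := closedNbhds)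
    (t := {v | k ≤ G.degree v}) (by omega)
  refine (mem_filter.mp hvk).2.trans
    (G.degree_le_delMaxDeg (fun hvX => hv ?_) fun w hw hwX => hv ?_)
  · exact mem_biUnion.mpr ⟨v, hvX, mem_insert_self _ _⟩
  · exact mem_biUnion.mpr ⟨w, hwX, mem_insert_of_mem ((G.mem_neighborFinset _ _).mpr hw.symm)⟩

end DeleteVertices

section Grid

variable {n m : ℕ}

lemma pathGraph_degree_le_two (i : Fin n) : (pathGraph n).degree i ≤ 2 := by
  have hnbrs : ∀ j ∈ (pathGraph n).neighborFinset i,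
      (j : ℕ) ∈ ({(i : ℕ) - 1, (i : ℕ) + 1} : Finset ℕ) := fun j hj => by
    rw [mem_neighborFinset, pathGraph_adj] at hj
    simp only [mem_insert, mem_singleton]
    omega
  exact (card_le_card_of_injOn Fin.val hnbrs Fin.val_injective.injOn).trans card_le_two

lemma two_le_pathGraph_degree {i : Fin n} (h0 : 0 < (i : ℕ)) (h1 : (i : ℕ) + 1 < n) :
    2 ≤ (pathGraph n).degree i := by
  refine one_lt_card.mpr ⟨⟨(i : ℕ) - 1, by omega⟩, ?_, ⟨(i : ℕ) + 1, h1⟩, ?_, fun h => ?_⟩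
  · rw [mem_neighborFinset, pathGraph_adj]; right; show (i : ℕ) - 1 + 1 = i; omega
  · rw [mem_neighborFinset, pathGraph_adj]; left; rfl
  · simp only [Fin.mk.injEq] at h; omega

lemma pathGraph_degree_pos (hn : 2 ≤ n) (i : Fin n) : 0 < (pathGraph n).degree i :=
  have : Nontrivial (Fin n) := Fin.nontrivial_iff_two_le.mpr hn
  (pathGraph_preconnected n).degree_pos_of_nontrivial i

lemma card_pathGraph_degree_lt_two : #{i : Fin n | (pathGraph n).degree i < 2} ≤ 2 := by
  have hends : ∀ i ∈ ({i | (pathGraph n).degree i < 2} : Finset (Fin n)),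
      (i : ℕ) ∈ ({0, n - 1} : Finset ℕ) := fun i hi => by
    have := (mem_filter.mp hi).2
    have := mt (two_le_pathGraph_degree (i := i))
    simp only [mem_insert, mem_singleton]
    omega
  exact (card_le_card_of_injOn Fin.val hends Fin.val_injective.injOn).trans card_le_two

lemma boxProd_pathGraph_degree_le_four (v : Fin n × Fin m) :
    (pathGraph n □ pathGraph m).degree v ≤ 4 := by
  rw [degree_boxProd]
  linarith [pathGraph_degree_le_two v.1, pathGraph_degree_le_two v.2]

lemma card_boxProd_pathGraph_degree_lt_three (hn : 2 ≤ n) (hm : 2 ≤ m) :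
    #{v : Fin n × Fin m | (pathGraph n □ pathGraph m).degree v < 3} ≤ 4 := by
  have hcorners : ({v | (pathGraph n □ pathGraph m).degree v < 3} : Finset (Fin n × Fin m)) ⊆
      ({i | (pathGraph n).degree i < 2} : Finset (Fin n)) ×ˢ
        ({j | (pathGraph m).degree j < 2} : Finset (Fin m)) := fun v hv => by
    have := (mem_filter.mp hv).2
    rw [degree_boxProd] at this
    have := pathGraph_degree_pos hn v.1
    have := pathGraph_degree_pos hm v.2
    simp only [mem_product, mem_filter, mem_univ, true_and]
    omega
  calc _ ≤ _ := card_le_card hcorners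
    _ ≤ 2 * 2 := by
      rw [card_product]
      exact Nat.mul_le_mul card_pathGraph_degree_lt_two card_pathGraph_degree_lt_two

end Grid

end SimpleGraph

/-- For grids `P_n □ P_m` with `n = 3, m ≥ 5` or `m ≥ n ≥ 4`, deleting any two vertices
leaves a graph of maximum degree at least `3`; hence `min_X max(Δ(G−X), |X|) > 2`. -/
theorem grid_del_two_maxDegree_ge_three (n m : ℕ)
    (h : (n = 3 ∧ 5 ≤ m) ∨ (4 ≤ n ∧ n ≤ m)) :
    (∀ X : Finset (Fin n × Fin m), X.card ≤ 2 →
      3 ≤ delMaxDeg (SimpleGraph.boxProd (SimpleGraph.pathGraph n) (SimpleGraph.pathGraph m)) X) ∧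
    2 < sInf (Set.range fun X : Finset (Fin n × Fin m) =>
        max (delMaxDeg (SimpleGraph.boxProd (SimpleGraph.pathGraph n)
          (SimpleGraph.pathGraph m)) X) X.card) := by
  have hn : 2 ≤ n := by omega
  have hm : 2 ≤ m := by omega
  have hnm : 15 ≤ n * m := by rcases h with ⟨rfl, _⟩ | ⟨_, _⟩ <;> nlinarith
  have hdel : ∀ X : Finset (Fin n × Fin m), #X ≤ 2 →
      3 ≤ delMaxDeg (pathGraph n □ pathGraph m) X := fun X hX =>
    le_delMaxDeg_of_card_lt (d := 4) _ boxProd_pathGraph_degree_le_four <| by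
      have := card_boxProd_pathGraph_degree_lt_three hn hm
      simp only [Fintype.card_prod, Fintype.card_fin]
      omega
  exact ⟨hdel, lt_sInf_range_max_card _ hdel⟩
end
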